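/- arXiv:1509.08356 — 2 statements merged into one kernel-verified Lean document; each statement's English description precedes it below -/
import Mathlib

section
/- Let 1 ≤ p < ∞. For a ∈ (0,1) define f_a(z) = (1-a)^{1/p}/(1-az)^{2/p}. Then there is a constant C = C(p) such that for all s ∈ [0,1) and all θ with (1-a)^{1/(2(2+p))} ≤ |θ| ≤ π: (i) |f_a(s e^{iθ})|^p ≤ C (1-a)^{1 - 1/(2+p)}, and (ii) |f_a'(s e^{iθ})|^p ≤ C (1-a)^{1/2}. -/
open Complex Real

/-!
Put `w = 1 - a s e^{iθ}`. Then `|f_a(se^{iθ})|^p = (1-a)/|w|^2` and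
`|f_a'(se^{iθ})|^p = (2a/p)^p (1-a)/|w|^{2+p}`. Since `|w|^2 = (as - cos θ)^2 + sin^2 θ`, and
`|w| ≥ Re w ≥ 1` when `cos θ ≤ 0`, Jordan's inequality gives `|θ| ≤ π |w|`. Raising
`(1-a)^{1/(2(2+p))} ≤ |θ| ≤ π |w|` to the powers `k = 2` and `k = 2 + p` bounds
`(1-a)/|w|^k` by `π^k (1-a)^{1 - k/(2(2+p))}`, which are the two estimates.
-/

lemma abs_sin_le_norm_one_sub_ofReal_mul_exp (r θ : ℝ) :
    |Real.sin θ| ≤ ‖1 - (r : ℂ) * exp (θ * I)‖ := by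
  have hsq : ‖1 - (r : ℂ) * exp (θ * I)‖ ^ 2 = (r - Real.cos θ) ^ 2 + Real.sin θ ^ 2 := by
    rw [Complex.sq_norm, Complex.normSq_apply]
    simp only [sub_re, sub_im, one_re, one_im, re_ofReal_mul, im_ofReal_mul,
      exp_ofReal_mul_I_re, exp_ofReal_mul_I_im]
    linear_combination (r ^ 2 - 1) * Real.sin_sq_add_cos_sq θ
  rw [← abs_norm, ← sq_le_sq, hsq]
  nlinarith [sq_nonneg (r - Real.cos θ)]

lemma one_le_norm_one_sub_ofReal_mul_exp {r θ : ℝ} (hr : 0 ≤ r) (hθ : Real.cos θ ≤ 0) :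
    1 ≤ ‖1 - (r : ℂ) * exp (θ * I)‖ := by
  calc (1 : ℝ) ≤ (1 - (r : ℂ) * exp (θ * I)).re := by
        simp only [sub_re, one_re, re_ofReal_mul, exp_ofReal_mul_I_re]
        nlinarith
    _ ≤ _ := Complex.re_le_norm _

lemma abs_le_pi_mul_norm_one_sub_ofReal_mul_exp {r θ : ℝ} (hr : 0 ≤ r) (hθ : |θ| ≤ π) :
    |θ| ≤ π * ‖1 - (r : ℂ) * exp (θ * I)‖ := by
  rcases le_or_gt (Real.cos θ) 0 with hcos | hcos
  · calc |θ| ≤ π * 1 := by rwa [mul_one]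
      _ ≤ _ := by gcongr; exact one_le_norm_one_sub_ofReal_mul_exp hr hcos
  · have hθ' : |θ| ≤ π / 2 := by
      by_contra! h
      have := Real.cos_nonpos_of_pi_div_two_le_of_le h.le (by linarith)
      rw [Real.cos_abs] at this
      linarith
    have hjordan := Real.mul_abs_le_abs_sin hθ'
    rw [div_mul_eq_mul_div, div_le_iff₀ Real.pi_pos] at hjordan
    have := mul_le_mul_of_nonneg_right (abs_sin_le_norm_one_sub_ofReal_mul_exp r θ) Real.pi_pos.le
    nlinarith [abs_nonneg θ]

lemma div_rpow_le_of_rpow_le_mul {δ R c e k : ℝ} (hδ : 0 < δ) (hR : 0 < R) (hk : 0 ≤ k)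
    (h : δ ^ e ≤ c * R) : δ / R ^ k ≤ c ^ k * δ ^ (1 - e * k) := by
  have hc : 0 ≤ c := by
    have := (Real.rpow_pos_of_pos hδ e).trans_le h
    exact (pos_of_mul_pos_left this hR.le).le
  have hpow : δ ^ (e * k) ≤ c ^ k * R ^ k := by
    rw [Real.rpow_mul hδ.le, ← Real.mul_rpow hc hR.le]
    exact Real.rpow_le_rpow (Real.rpow_nonneg hδ.le _) h hk
  rw [div_le_iff₀ (Real.rpow_pos_of_pos hR k)]
  calc δ = δ ^ (1 - e * k) * δ ^ (e * k) := by rw [← Real.rpow_add hδ]; simp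
    _ ≤ δ ^ (1 - e * k) * (c ^ k * R ^ k) := by gcongr
    _ = c ^ k * δ ^ (1 - e * k) * R ^ k := by ring

lemma norm_cpow_div_cpow_rpow {p : ℝ} (hp : p ≠ 0) (z w : ℂ) :
    ‖z ^ ((1 : ℂ) / p) / w ^ ((2 : ℂ) / p)‖ ^ p = ‖z‖ / ‖w‖ ^ (2 : ℝ) := by
  have h1 : (1 : ℂ) / p = ((1 / p : ℝ) : ℂ) := by push_cast; rfl
  have h2 : (2 : ℂ) / p = ((2 / p : ℝ) : ℂ) := by push_cast; rfl
  rw [h1, h2, norm_div, norm_cpow_real, norm_cpow_real,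
    Real.div_rpow (by positivity) (by positivity), ← Real.rpow_mul (norm_nonneg _),
    ← Real.rpow_mul (norm_nonneg _), one_div_mul_cancel hp, div_mul_cancel₀ _ hp, Real.rpow_one]

lemma norm_mul_cpow_mul_cpow_rpow {p : ℝ} (hp : p ≠ 0) (c z w : ℂ) :
    ‖c * z ^ ((1 : ℂ) / p) * w ^ (-(2 : ℂ) / p - 1)‖ ^ p = ‖c‖ ^ p * (‖z‖ / ‖w‖ ^ (2 + p)) := by
  have h1 : (1 : ℂ) / p = ((1 / p : ℝ) : ℂ) := by push_cast; rfl
  have h2 : -(2 : ℂ) / p - 1 = ((-(2 + p) / p : ℝ) : ℂ) := by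
    push_cast
    field_simp [ofReal_ne_zero.mpr hp]
    ring
  rw [h1, h2, norm_mul, norm_mul, norm_cpow_real, norm_cpow_real,
    Real.mul_rpow (by positivity) (by positivity), Real.mul_rpow (by positivity) (by positivity),
    ← Real.rpow_mul (norm_nonneg z), ← Real.rpow_mul (norm_nonneg w), one_div_mul_cancel hp,
    div_mul_cancel₀ _ hp, Real.rpow_one, Real.rpow_neg (norm_nonneg w)]
  ring

/-- Pointwise decay estimates for the test function `f_a(z) = (1-a)^{1/p}/(1-az)^{2/p}`
and its derivative away from the arc `I(a)`: for `(1-a)^{1/(2(2+p))} ≤ |θ| ≤ π`,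
`|f_a(se^{iθ})|^p ≤ C (1-a)^{1-1/(2+p)}` and `|f_a'(se^{iθ})|^p ≤ C (1-a)^{1/2}`. -/
theorem test_function_decay (p : ℝ) (hp : 1 ≤ p) :
    ∃ C > (0:ℝ), ∀ a ∈ Set.Ioo (0:ℝ) 1, ∀ s ∈ Set.Ico (0:ℝ) 1, ∀ θ : ℝ,
      (1 - a) ^ (1 / (2 * (2 + p))) ≤ |θ| → |θ| ≤ π →
      ‖((1 - (a:ℂ)) ^ ((1:ℂ)/(p:ℂ))) /
          ((1 - (a:ℂ) * ((s:ℂ) * Complex.exp (θ * Complex.I))) ^ ((2:ℂ)/(p:ℂ)))‖ ^ p ≤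
        C * (1 - a) ^ (1 - 1/(2+p)) ∧
      ‖(2*(a:ℂ)/(p:ℂ)) * ((1 - (a:ℂ)) ^ ((1:ℂ)/(p:ℂ))) *
          ((1 - (a:ℂ) * ((s:ℂ) * Complex.exp (θ * Complex.I))) ^ (-(2:ℂ)/(p:ℂ) - 1))‖ ^ p ≤
        C * (1 - a) ^ ((1:ℝ)/2) := by
  have hp0 : 0 < p := one_pos.trans_le hp
  refine ⟨max (π ^ (2 : ℝ)) (2 ^ p * π ^ (2 + p)), lt_max_of_lt_left (by positivity), ?_⟩
  rintro a ⟨ha0, ha1⟩ s ⟨hs0, hs1⟩ θ hθ hθπ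
  have hδ : 0 < 1 - a := sub_pos.mpr ha1
  have hnorm : ‖1 - (a : ℂ)‖ = 1 - a := by
    rw [← ofReal_one, ← ofReal_sub, norm_real, Real.norm_of_nonneg hδ.le]
  have hw : 1 - (a : ℂ) * (s * exp (θ * I)) = 1 - ((a * s : ℝ) : ℂ) * exp (θ * I) := by
    push_cast; ring
  set R := ‖1 - ((a * s : ℝ) : ℂ) * exp (θ * I)‖
  have hθR : (1 - a) ^ (1 / (2 * (2 + p))) ≤ π * R :=
    hθ.trans (abs_le_pi_mul_norm_one_sub_ofReal_mul_exp (by positivity) hθπ)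
  have hR : 0 < R := pos_of_mul_pos_right ((Real.rpow_pos_of_pos hδ _).trans_le hθR) pi_pos.le
  rw [hw, norm_cpow_div_cpow_rpow hp0.ne', norm_mul_cpow_mul_cpow_rpow hp0.ne', hnorm]
  constructor
  · calc (1 - a) / R ^ (2 : ℝ) ≤ π ^ (2 : ℝ) * (1 - a) ^ (1 - 1 / (2 * (2 + p)) * 2) :=
          div_rpow_le_of_rpow_le_mul hδ hR zero_le_two hθR
      _ = π ^ (2 : ℝ) * (1 - a) ^ (1 - 1 / (2 + p)) := by
          congr 2; field_simp
      _ ≤ _ := by gcongr; exact le_max_left _ _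
  · have hcoef : ‖2 * (a : ℂ) / p‖ ≤ 2 := by
      rw [show 2 * (a : ℂ) / p = ((2 * a / p : ℝ) : ℂ) by push_cast; rfl, norm_real,
        Real.norm_of_nonneg (by positivity), div_le_iff₀ hp0]
      nlinarith
    calc ‖2 * (a : ℂ) / p‖ ^ p * ((1 - a) / R ^ (2 + p))
        ≤ 2 ^ p * (π ^ (2 + p) * (1 - a) ^ (1 - 1 / (2 * (2 + p)) * (2 + p))) := by
          gcongr
          exact div_rpow_le_of_rpow_le_mul hδ hR (by positivity) hθR
      _ = 2 ^ p * π ^ (2 + p) * (1 - a) ^ ((1 : ℝ) / 2) := by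
          rw [mul_assoc]; congr 3; field_simp; ring
      _ ≤ _ := by gcongr; exact le_max_right _ _
end

section
/- Every strictly singular bounded linear operator T : ℓ^p → ℓ^p, 1 ≤ p < ∞, is compact. -/
/-- A bounded operator `T : X → X` is strictly singular if its restriction to every
infinite-dimensional closed subspace fails to be an isomorphism onto its image;
equivalently, for every such subspace `N` and every `η > 0` there is a norm-one
`x ∈ N` with `‖T x‖ < η`. -/
def StrictlySingular {X : Type*} [NormedAddCommGroup X] [NormedSpace ℂ X]
    (T : X →L[ℂ] X) : Prop :=
  ∀ N : Submodule ℂ X, IsClosed (N : Set X) → ¬ FiniteDimensional ℂ N →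
    ∀ η > (0:ℝ), ∃ x ∈ N, ‖x‖ = 1 ∧ ‖T x‖ < η

/-!
If `T` is not compact, the image of the unit ball contains an `ε`-separated sequence `T uₙ`.
Passing to a coordinatewise convergent subsequence and taking consecutive differences gives a
bounded sequence `wₙ` with `‖T wₙ‖ ≥ ε` such that both `wₙ` and `T wₙ` tend to `0` coordinatewise.
A gliding hump argument extracts a subsequence along which `wₙₖ` and `T wₙₖ` are summably small
perturbations of vectors supported on consecutive disjoint blocks of coordinates. Disjoint blocks
behave like the unit vector basis of `ℓ^p`, so `‖∑ aₖ wₙₖ‖ ≲ ‖a‖ₚ ≲ ‖T (∑ aₖ wₙₖ)‖`: `T` is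
bounded below on the infinite-dimensional closed span of the `wₙₖ`, so it is not strictly
singular.
-/

open Metric Filter Finset Topology
open scoped ENNReal

section FinsetLpNorm

variable {ι 𝕜 : Type*}

noncomputable def finsetLpNorm [Norm 𝕜] (r : ℝ) (s : Finset ι) (a : ι → 𝕜) : ℝ :=
  (∑ k ∈ s, ‖a k‖ ^ r) ^ r⁻¹

variable [SeminormedAddGroup 𝕜] {r : ℝ} {s : Finset ι} {a : ι → 𝕜}

lemma finsetLpNorm_nonneg : 0 ≤ finsetLpNorm r s a :=
  Real.rpow_nonneg (sum_nonneg fun _ _ => Real.rpow_nonneg (norm_nonneg _) _) _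

lemma finsetLpNorm_rpow (hr : r ≠ 0) :
    finsetLpNorm r s a ^ r = ∑ k ∈ s, ‖a k‖ ^ r :=
  Real.rpow_inv_rpow (sum_nonneg fun _ _ => Real.rpow_nonneg (norm_nonneg _) _) hr

lemma norm_le_finsetLpNorm (hr : 0 < r) {k : ι} (hk : k ∈ s) : ‖a k‖ ≤ finsetLpNorm r s a := by
  refine (Real.rpow_le_rpow_iff (norm_nonneg _) finsetLpNorm_nonneg hr).mp ?_
  rw [finsetLpNorm_rpow hr.ne']
  exact single_le_sum (fun j _ => Real.rpow_nonneg (norm_nonneg (a j)) r) hk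

end FinsetLpNorm

lemma linearIndependent_of_mul_finsetLpNorm_le {ι 𝕜 E : Type*} [NormedField 𝕜]
    [SeminormedAddCommGroup E] [NormedSpace 𝕜 E] {v : ι → E} {r c : ℝ} (hr : 0 < r) (hc : 0 < c)
    (h : ∀ (s : Finset ι) (a : ι → 𝕜), c * finsetLpNorm r s a ≤ ‖∑ k ∈ s, a k • v k‖) :
    LinearIndependent 𝕜 v := by
  rw [linearIndependent_iff']
  intro s a hsum k hk
  have hA : finsetLpNorm r s a ≤ 0 := by
    have := h s a
    rw [hsum, norm_zero] at this
    exact nonpos_of_mul_nonpos_right this hc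
  exact norm_le_zero_iff.mp ((norm_le_finsetLpNorm hr hk).trans hA)

lemma exists_finset_sum_eq_of_mem_span_range {ι R M : Type*} [Semiring R] [AddCommMonoid M]
    [Module R M] {v : ι → M} {x : M} (hx : x ∈ Submodule.span R (Set.range v)) :
    ∃ (s : Finset ι) (a : ι → R), ∑ k ∈ s, a k • v k = x := by
  obtain ⟨l, rfl⟩ := Finsupp.mem_span_range_iff_exists_finsupp.mp hx
  exact ⟨l.support, l, rfl⟩

lemma norm_sum_smul_sub_sum_smul_le {ι 𝕜 E : Type*} [NormedField 𝕜] [SeminormedAddCommGroup E]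
    [NormedSpace 𝕜 E] {v b : ι → E} {δ : ι → ℝ} {r D : ℝ} (hr : 0 < r) (hδ : HasSum δ D)
    (hvb : ∀ k, ‖v k - b k‖ ≤ δ k) (s : Finset ι) (a : ι → 𝕜) :
    ‖∑ k ∈ s, a k • v k - ∑ k ∈ s, a k • b k‖ ≤ finsetLpNorm r s a * D := by
  have hδ0 : ∀ k, 0 ≤ δ k := fun k => (norm_nonneg _).trans (hvb k)
  rw [← sum_sub_distrib]
  calc ‖∑ k ∈ s, (a k • v k - a k • b k)‖ ≤ ∑ k ∈ s, ‖a k‖ * δ k := by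
        refine (norm_sum_le _ _).trans (sum_le_sum fun k _ => ?_)
        rw [← smul_sub, norm_smul]
        exact mul_le_mul_of_nonneg_left (hvb k) (norm_nonneg _)
    _ ≤ ∑ k ∈ s, finsetLpNorm r s a * δ k :=
        sum_le_sum fun k hk => mul_le_mul_of_nonneg_right (norm_le_finsetLpNorm hr hk) (hδ0 k)
    _ = finsetLpNorm r s a * ∑ k ∈ s, δ k := (mul_sum ..).symm
    _ ≤ finsetLpNorm r s a * D :=
        mul_le_mul_of_nonneg_left (sum_le_hasSum s (fun k _ => hδ0 k) hδ) finsetLpNorm_nonneg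

lemma not_strictlySingular_of_le_norm_on_span {X ι : Type*} [NormedAddCommGroup X]
    [NormedSpace ℂ X] [Infinite ι] (T : X →L[ℂ] X) {v : ι → X} (hv : LinearIndependent ℂ v)
    {c : ℝ} (hc : 0 < c) (hT : ∀ x ∈ Submodule.span ℂ (Set.range v), c * ‖x‖ ≤ ‖T x‖) :
    ¬ StrictlySingular T := by
  intro hsing
  set N := (Submodule.span ℂ (Set.range v)).topologicalClosure
  have hN : ∀ x ∈ N, c * ‖x‖ ≤ ‖T x‖ := fun x hx =>
    closure_minimal hT
      (isClosed_le (continuous_const.mul continuous_norm) T.continuous.norm) hx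
  have hNinf : ¬ FiniteDimensional ℂ N := by
    intro _
    have hvN : ∀ k, v k ∈ N := fun k =>
      Submodule.le_topologicalClosure _ (Submodule.subset_span (Set.mem_range_self k))
    exact Module.Finite.not_linearIndependent_of_infinite (fun k => (⟨v k, hvN k⟩ : N))
      (LinearIndependent.of_comp N.subtype hv)
  obtain ⟨x, hxN, hx1, hTx⟩ :=
    hsing N (Submodule.isClosed_topologicalClosure _) hNinf c hc
  have := hN x hxN
  rw [hx1, mul_one] at this
  exact this.not_gt hTx

lemma exists_seq_separated_of_not_isCompactOperator {Y Z : Type*} [SeminormedAddCommGroup Y]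
    [MetricSpace Z] [CompleteSpace Z] {f : Y → Z} (hf : ¬ IsCompactOperator f) :
    ∃ ε > (0 : ℝ), ∃ u : ℕ → Y, (∀ k, ‖u k‖ ≤ 1) ∧
      ∀ j k, j < k → ε ≤ dist (f (u j)) (f (u k)) := by
  have hnot : ¬ TotallyBounded (f '' closedBall 0 1) := fun htb =>
    hf ((isCompactOperator_iff_exists_mem_nhds_image_subset_compact f).mpr
      ⟨closedBall 0 1, closedBall_mem_nhds _ one_pos, closure (f '' closedBall 0 1),
        htb.closure.isCompact_of_isClosed isClosed_closure, subset_closure⟩)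
  rw [Metric.totallyBounded_iff] at hnot
  push Not at hnot
  obtain ⟨ε, hε, hcover⟩ := hnot
  have hnext : ∀ s : Finset Y, (∀ x ∈ s, ‖x‖ ≤ 1) →
      ∃ y, ‖y‖ ≤ 1 ∧ ∀ x ∈ s, ε ≤ dist (f x) (f y) := by
    intro s _
    obtain ⟨_, ⟨y, hy, rfl⟩, hy_far⟩ :=
      Set.not_subset.mp (hcover (f '' s) ((s : Set Y).toFinite.image f))
    refine ⟨y, by simpa using hy, fun x hx => ?_⟩
    by_contra! hlt
    exact hy_far (Set.mem_biUnion (Set.mem_image_of_mem f hx) (by rwa [mem_ball, dist_comm]))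
  obtain ⟨u, hu, husep⟩ := exists_seq_of_forall_finset_exists _ _ hnext
  exact ⟨ε, hε, u, hu, husep⟩

namespace lp

section NormedField

variable {𝕜 : Type*} [NormedField 𝕜] {q : ℝ≥0∞}

local notation "ℓ" => lp (fun _ : ℕ => 𝕜) q

noncomputable def truncate (s : Finset ℕ) (f : ℓ) : ℓ :=
  ∑ i ∈ s, lp.single q i (f i)

lemma truncate_apply (s : Finset ℕ) (f : ℓ) (i : ℕ) :
    truncate s f i = if i ∈ s then f i else 0 := by
  rw [truncate, coeFn_sum, Finset.sum_apply]
  simp [lp.single_apply, Pi.single_apply]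

lemma truncate_apply_of_notMem {s : Finset ℕ} {i : ℕ} (hi : i ∉ s) (f : ℓ) :
    truncate s f i = 0 := by
  rw [truncate_apply, if_neg hi]

lemma truncate_Ico {m M : ℕ} (h : m ≤ M) (f : ℓ) :
    truncate (Ico m M) f = truncate (range M) f - truncate (range m) f :=
  sum_Ico_eq_sub _ h

lemma tendsto_truncate_range [Fact (1 ≤ q)] (hq : q ≠ ∞) (f : ℓ) :
    Tendsto (fun M => truncate (range M) f) atTop (𝓝 f) :=
  (lp.hasSum_single hq f).tendsto_sum_nat

lemma tendsto_truncate_of_tendsto_apply [Fact (1 ≤ q)] {α : Type*} {l : Filter α} {w : α → ℓ}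
    (hw : ∀ i, Tendsto (fun n => w n i) l (𝓝 0)) (s : Finset ℕ) :
    Tendsto (fun n => truncate s (w n)) l (𝓝 0) := by
  have := tendsto_finsetSum s fun i _ =>
    ((lp.isometry_single (E := fun _ : ℕ => 𝕜) (p := q) i).continuous.tendsto 0).comp (hw i)
  simpa [truncate] using this

lemma norm_sub_truncate_Ico_le [Fact (1 ≤ q)] {m M : ℕ} (h : m ≤ M) (f : ℓ) :
    ‖f - truncate (Ico m M) f‖ ≤ ‖f - truncate (range M) f‖ + ‖truncate (range m) f‖ := by
  rw [truncate_Ico h, sub_sub_eq_add_sub, add_sub_right_comm]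
  exact norm_add_le _ _

lemma exists_norm_sub_truncate_Ico_le [Fact (1 ≤ q)] (hq : q ≠ ∞) {w y : ℕ → ℓ}
    (hw : ∀ i, Tendsto (fun n => w n i) atTop (𝓝 0))
    (hy : ∀ i, Tendsto (fun n => y n i) atTop (𝓝 0)) (m : ℕ) {δ : ℝ} (hδ : 0 < δ) :
    ∃ n M, m ≤ M ∧ ‖w n - truncate (Ico m M) (w n)‖ ≤ δ ∧
      ‖y n - truncate (Ico m M) (y n)‖ ≤ δ := by
  have head : ∀ {z : ℕ → ℓ}, (∀ i, Tendsto (fun n => z n i) atTop (𝓝 0)) →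
      ∀ᶠ n in atTop, ‖truncate (range m) (z n)‖ < δ / 2 := fun hz =>
    (tendsto_truncate_of_tendsto_apply hz _).norm.eventually
      (gt_mem_nhds (by simpa using half_pos hδ))
  have tail (f : ℓ) : ∀ᶠ M in atTop, ‖f - truncate (range M) f‖ < δ / 2 := by
    have := (tendsto_iff_norm_sub_tendsto_zero.mp (tendsto_truncate_range hq f)).eventually
      (gt_mem_nhds (half_pos hδ))
    simpa [norm_sub_rev] using this
  obtain ⟨n, hwn, hyn⟩ := ((head hw).and (head hy)).exists
  obtain ⟨M, hwM, hyM, hmM⟩ :=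
    ((tail (w n)).and ((tail (y n)).and (eventually_ge_atTop m))).exists
  refine ⟨n, M, hmM, ?_, ?_⟩
  · linarith [norm_sub_truncate_Ico_le hmM (w n)]
  · linarith [norm_sub_truncate_Ico_le hmM (y n)]

lemma exists_gliding_hump [Fact (1 ≤ q)] (hq : q ≠ ∞) {w y : ℕ → ℓ}
    (hw : ∀ i, Tendsto (fun n => w n i) atTop (𝓝 0))
    (hy : ∀ i, Tendsto (fun n => y n i) atTop (𝓝 0)) {δ : ℕ → ℝ} (hδ : ∀ k, 0 < δ k) :
    ∃ n M : ℕ → ℕ, Monotone M ∧ ∀ k,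
      ‖w (n k) - truncate (Ico (M k) (M (k + 1))) (w (n k))‖ ≤ δ k ∧
      ‖y (n k) - truncate (Ico (M k) (M (k + 1))) (y (n k))‖ ≤ δ k := by
  choose n M hmM hwM hyM using fun k m => exists_norm_sub_truncate_Ico_le hq hw hy m (hδ k)
  -- `B (k + 1) = M k (B k)`: each block starts where the previous one ends.
  let B : ℕ → ℕ := fun k => Nat.rec 0 (fun k b => M k b) k
  exact ⟨fun k => n k (B k), B, monotone_nat_of_le_succ fun k => hmM k (B k),
    fun k => ⟨hwM k (B k), hyM k (B k)⟩⟩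

lemma norm_add_rpow_of_disjoint {α : Type*} {E : α → Type*} [∀ i, NormedAddCommGroup (E i)]
    (hq : 0 < q.toReal) {f g : lp E q} (h : ∀ i, f i = 0 ∨ g i = 0) :
    ‖f + g‖ ^ q.toReal = ‖f‖ ^ q.toReal + ‖g‖ ^ q.toReal := by
  rw [norm_rpow_eq_tsum hq, norm_rpow_eq_tsum hq, norm_rpow_eq_tsum hq,
    ← ((lp.memℓp f).summable hq).tsum_add ((lp.memℓp g).summable hq)]
  congr 1
  funext i
  rcases h i with h0 | h0 <;> simp [h0, Real.zero_rpow hq.ne']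

lemma norm_sum_smul_rpow_of_block [Fact (1 ≤ q)] (hq : q ≠ ∞) {M : ℕ → ℕ} (hM : Monotone M)
    {b : ℕ → ℓ} (hb : ∀ k, ∀ i ∉ Ico (M k) (M (k + 1)), b k i = 0) (s : Finset ℕ) (a : ℕ → 𝕜) :
    ‖∑ k ∈ s, a k • b k‖ ^ q.toReal = ∑ k ∈ s, ‖a k‖ ^ q.toReal * ‖b k‖ ^ q.toReal := by
  have hr := q.toReal_pos_iff_ne_top.mpr hq
  induction s using Finset.induction_on_max with
  | empty => simp [Real.zero_rpow hr.ne']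
  | insert k s hlt ih =>
    have hks : k ∉ s := fun h => (hlt k h).false
    rw [sum_insert hks, sum_insert hks, add_comm, norm_add_rpow_of_disjoint hr, ih, add_comm,
      norm_smul, Real.mul_rpow (norm_nonneg _) (norm_nonneg _)]
    intro i
    rcases lt_or_ge i (M k) with hi | hi
    · right
      simp [hb k i (by simp [hi])]
    · left
      rw [coeFn_sum, Finset.sum_apply]
      refine sum_eq_zero fun j hj => ?_
      have hbj : b j i = 0 := hb j i (by simp [(hM (hlt j hj)).trans hi])
      simp [hbj]

lemma norm_sum_smul_le_of_block [Fact (1 ≤ q)] (hq : q ≠ ∞) {M : ℕ → ℕ} (hM : Monotone M)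
    {b : ℕ → ℓ} (hb : ∀ k, ∀ i ∉ Ico (M k) (M (k + 1)), b k i = 0) {C : ℝ} (hC : ∀ k, ‖b k‖ ≤ C)
    (s : Finset ℕ) (a : ℕ → 𝕜) :
    ‖∑ k ∈ s, a k • b k‖ ≤ C * finsetLpNorm q.toReal s a := by
  have hr := q.toReal_pos_iff_ne_top.mpr hq
  have hC0 : 0 ≤ C := (norm_nonneg _).trans (hC 0)
  refine (Real.rpow_le_rpow_iff (norm_nonneg _) (mul_nonneg hC0 finsetLpNorm_nonneg) hr).mp ?_
  rw [norm_sum_smul_rpow_of_block hq hM hb, Real.mul_rpow hC0 finsetLpNorm_nonneg,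
    finsetLpNorm_rpow hr.ne', mul_sum]
  refine sum_le_sum fun k _ => ?_
  rw [mul_comm]
  gcongr
  exact hC k

lemma le_norm_sum_smul_of_block [Fact (1 ≤ q)] (hq : q ≠ ∞) {M : ℕ → ℕ} (hM : Monotone M)
    {b : ℕ → ℓ} (hb : ∀ k, ∀ i ∉ Ico (M k) (M (k + 1)), b k i = 0) {c : ℝ} (hc : ∀ k, c ≤ ‖b k‖)
    (s : Finset ℕ) (a : ℕ → 𝕜) :
    c * finsetLpNorm q.toReal s a ≤ ‖∑ k ∈ s, a k • b k‖ := by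
  have hr := q.toReal_pos_iff_ne_top.mpr hq
  rcases le_or_gt c 0 with hc0 | hc0
  · exact (mul_nonpos_of_nonpos_of_nonneg hc0 finsetLpNorm_nonneg).trans (norm_nonneg _)
  refine (Real.rpow_le_rpow_iff (mul_nonneg hc0.le finsetLpNorm_nonneg) (norm_nonneg _) hr).mp ?_
  rw [norm_sum_smul_rpow_of_block hq hM hb, Real.mul_rpow hc0.le finsetLpNorm_nonneg,
    finsetLpNorm_rpow hr.ne', mul_sum]
  refine sum_le_sum fun k _ => ?_
  rw [mul_comm]
  gcongr
  exact hc k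

lemma norm_sum_smul_le_of_near_block [Fact (1 ≤ q)] (hq : q ≠ ∞) {M : ℕ → ℕ} (hM : Monotone M)
    {v : ℕ → ℓ} {δ : ℕ → ℝ} {D : ℝ} (hδ : HasSum δ D)
    (hv : ∀ k, ‖v k - truncate (Ico (M k) (M (k + 1))) (v k)‖ ≤ δ k) {C : ℝ}
    (hC : ∀ k, ‖v k‖ ≤ C) (s : Finset ℕ) (a : ℕ → 𝕜) :
    ‖∑ k ∈ s, a k • v k‖ ≤ (C + 2 * D) * finsetLpNorm q.toReal s a := by
  set b := fun k => truncate (Ico (M k) (M (k + 1))) (v k)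
  have hδ0 : ∀ k, 0 ≤ δ k := fun k => (norm_nonneg _).trans (hv k)
  have hb : ∀ k, ‖b k‖ ≤ C + D := fun k => by
    linarith [norm_le_norm_add_norm_sub' (b k) (v k), norm_sub_rev (v k) (b k), hv k, hC k,
      le_hasSum hδ k fun j _ => hδ0 j]
  have hblock := norm_sum_smul_le_of_block hq hM
    (fun k _ hi => truncate_apply_of_notMem hi (v k)) hb s a
  have hnear := norm_sum_smul_sub_sum_smul_le (q.toReal_pos_iff_ne_top.mpr hq) hδ hv s a
  linarith [norm_le_norm_add_norm_sub' (∑ k ∈ s, a k • v k) (∑ k ∈ s, a k • b k)]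

lemma le_norm_sum_smul_of_near_block [Fact (1 ≤ q)] (hq : q ≠ ∞) {M : ℕ → ℕ} (hM : Monotone M)
    {v : ℕ → ℓ} {δ : ℕ → ℝ} {D : ℝ} (hδ : HasSum δ D)
    (hv : ∀ k, ‖v k - truncate (Ico (M k) (M (k + 1))) (v k)‖ ≤ δ k) {c : ℝ}
    (hc : ∀ k, c ≤ ‖v k‖) (s : Finset ℕ) (a : ℕ → 𝕜) :
    (c - 2 * D) * finsetLpNorm q.toReal s a ≤ ‖∑ k ∈ s, a k • v k‖ := by
  set b := fun k => truncate (Ico (M k) (M (k + 1))) (v k)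
  have hδ0 : ∀ k, 0 ≤ δ k := fun k => (norm_nonneg _).trans (hv k)
  have hb : ∀ k, c - D ≤ ‖b k‖ := fun k => by
    linarith [norm_le_norm_add_norm_sub' (v k) (b k), hv k, hc k, le_hasSum hδ k fun j _ => hδ0 j]
  have hblock := le_norm_sum_smul_of_block hq hM
    (fun k _ hi => truncate_apply_of_notMem hi (v k)) hb s a
  have hnear := norm_sum_smul_sub_sum_smul_le (q.toReal_pos_iff_ne_top.mpr hq) hδ hv s a
  linarith [norm_le_norm_add_norm_sub' (∑ k ∈ s, a k • b k) (∑ k ∈ s, a k • v k),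
    norm_sub_rev (∑ k ∈ s, a k • v k) (∑ k ∈ s, a k • b k)]

lemma exists_subseq_tendsto_apply [ProperSpace 𝕜] [Fact (1 ≤ q)] {f : ℕ → ℓ} {R : ℝ}
    (hf : ∀ n, ‖f n‖ ≤ R) :
    ∃ φ : ℕ → ℕ, StrictMono φ ∧ ∃ L : ℕ → 𝕜, ∀ i, Tendsto (fun k => f (φ k) i) atTop (𝓝 (L i)) := by
  have hmem : ∀ n, ⇑(f n) ∈ Set.univ.pi fun _ : ℕ => closedBall (0 : 𝕜) R := fun n i _ => by
    simpa using (norm_apply_le_norm (zero_lt_one.trans_le Fact.out).ne' (f n) i).trans (hf n)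
  obtain ⟨L, -, φ, hφ, hL⟩ :=
    (isCompact_univ_pi fun _ => isCompact_closedBall 0 R).tendsto_subseq hmem
  exact ⟨φ, hφ, L, tendsto_pi_nhds.mp hL⟩

end NormedField

section NontriviallyNormedField

variable {𝕜 : Type*} [NontriviallyNormedField 𝕜] [ProperSpace 𝕜] {q : ℝ≥0∞} [Fact (1 ≤ q)]

local notation "ℓ" => lp (fun _ : ℕ => 𝕜) q

lemma exists_tendsto_apply_zero_of_not_isCompactOperator
    {T : ℓ →L[𝕜] ℓ} (hT : ¬ IsCompactOperator T) :
    ∃ ε > (0 : ℝ), ∃ w : ℕ → ℓ, (∀ k, ‖w k‖ ≤ 2) ∧ (∀ k, ε ≤ ‖T (w k)‖) ∧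
      (∀ i, Tendsto (fun k => w k i) atTop (𝓝 0)) ∧
      (∀ i, Tendsto (fun k => T (w k) i) atTop (𝓝 0)) := by
  obtain ⟨ε, hε, u, hu, hsep⟩ := exists_seq_separated_of_not_isCompactOperator hT
  obtain ⟨φ, hφ, L, hL⟩ := exists_subseq_tendsto_apply hu
  obtain ⟨ψ, hψ, L', hL'⟩ :=
    exists_subseq_tendsto_apply (f := fun k => T (u (φ k))) (R := ‖T‖ * 1) fun k =>
      T.le_opNorm_of_le (hu (φ k))
  have hdiff {x : ℕ → 𝕜} {l : 𝕜} (h : Tendsto x atTop (𝓝 l)) :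
      Tendsto (fun k => x (k + 1) - x k) atTop (𝓝 0) := by
    simpa using (h.comp (tendsto_add_atTop_nat 1)).sub h
  refine ⟨ε, hε, fun k => u (φ (ψ (k + 1))) - u (φ (ψ k)), fun k => ?_, fun k => ?_,
    fun i => ?_, fun i => ?_⟩
  · linarith [norm_sub_le (u (φ (ψ (k + 1)))) (u (φ (ψ k))), hu (φ (ψ (k + 1))), hu (φ (ψ k))]
  · rw [map_sub, ← dist_eq_norm, dist_comm]
    exact hsep _ _ (hφ (hψ k.lt_succ_self))
  · simpa using hdiff ((hL i).comp hψ.tendsto_atTop)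
  · simpa using hdiff (hL' i)

lemma exists_linearIndependent_bddBelow_on_span_of_not_isCompactOperator (hq : q ≠ ∞)
    {T : ℓ →L[𝕜] ℓ} (hT : ¬ IsCompactOperator T) :
    ∃ c > (0 : ℝ), ∃ v : ℕ → ℓ, LinearIndependent 𝕜 v ∧
      ∀ x ∈ Submodule.span 𝕜 (Set.range v), c * ‖x‖ ≤ ‖T x‖ := by
  obtain ⟨ε, hε, w, hw, hTw, hw0, hTw0⟩ := exists_tendsto_apply_zero_of_not_isCompactOperator hT
  set D := min 1 (ε / 4)
  have hD : 0 < D := by positivity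
  obtain ⟨n, M, hM, hwM⟩ :=
    exists_gliding_hump hq hw0 hTw0 (δ := fun k => D / 2 / 2 ^ k) fun k => by positivity
  have hδ : HasSum (fun k => D / 2 / 2 ^ k) D := hasSum_geometric_two' D
  have upper (s : Finset ℕ) (a : ℕ → 𝕜) :
      ‖∑ k ∈ s, a k • w (n k)‖ ≤ 4 * finsetLpNorm q.toReal s a :=
    (norm_sum_smul_le_of_near_block hq hM hδ (fun k => (hwM k).1) (fun k => hw (n k)) s a).trans
      (mul_le_mul_of_nonneg_right (by linarith [min_le_left 1 (ε / 4)]) finsetLpNorm_nonneg)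
  have lower (s : Finset ℕ) (a : ℕ → 𝕜) :
      ε / 2 * finsetLpNorm q.toReal s a ≤ ‖∑ k ∈ s, a k • T (w (n k))‖ :=
    le_trans (mul_le_mul_of_nonneg_right (by linarith [min_le_right 1 (ε / 4)]) finsetLpNorm_nonneg)
      (le_norm_sum_smul_of_near_block hq hM hδ (fun k => (hwM k).2) (fun k => hTw (n k)) s a)
  refine ⟨ε / 8, by positivity, fun k => w (n k), ?_, fun x hx => ?_⟩
  · exact LinearIndependent.of_comp (T : ℓ →ₗ[𝕜] ℓ) <|
      linearIndependent_of_mul_finsetLpNorm_le (q.toReal_pos_iff_ne_top.mpr hq) (half_pos hε) lower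
  · obtain ⟨s, a, rfl⟩ := exists_finset_sum_eq_of_mem_span_range hx
    calc ε / 8 * ‖∑ k ∈ s, a k • w (n k)‖ ≤ ε / 8 * (4 * finsetLpNorm q.toReal s a) := by
          gcongr; exact upper s a
      _ = ε / 2 * finsetLpNorm q.toReal s a := by ring
      _ ≤ ‖T (∑ k ∈ s, a k • w (n k))‖ := by simpa [map_sum] using lower s a

end NontriviallyNormedField

end lp

theorem strictly_singular_on_lp_is_compact_general (p : ℝ)
    [Fact (1 ≤ ENNReal.ofReal p)]
    (T : lp (fun _ : ℕ => ℂ) (ENNReal.ofReal p) →L[ℂ] lp (fun _ : ℕ => ℂ) (ENNReal.ofReal p))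
    (hT : StrictlySingular T) : IsCompactOperator T := by
  by_contra hT_compact
  obtain ⟨c, hc, v, hv, hTv⟩ :=
    lp.exists_linearIndependent_bddBelow_on_span_of_not_isCompactOperator ENNReal.ofReal_ne_top
      hT_compact
  exact not_strictlySingular_of_le_norm_on_span T hv hc hTv hT

/-- Every strictly singular bounded operator on `ℓ^p`, `1 ≤ p < ∞`, is compact. -/
theorem strictly_singular_on_lp_is_compact (p : ℝ) (hp : 1 ≤ p)
    [Fact (1 ≤ ENNReal.ofReal p)]
    (T : lp (fun _ : ℕ => ℂ) (ENNReal.ofReal p) →L[ℂ] lp (fun _ : ℕ => ℂ) (ENNReal.ofReal p))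
    (hT : StrictlySingular T) : IsCompactOperator T :=
  strictly_singular_on_lp_is_compact_general p T hT
end
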